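/- arXiv:2308.05043 — 3 statements merged into one kernel-verified Lean document; each statement's English description precedes it below -/
import Mathlib

section
/- A 3-adjacent cluster of 2 hyperedges has no convex polygon representation: if two hyperedges of a hypergraph share at least three common vertices, then there is no drawing in the plane in which both hyperedges are represented by strictly convex polygons with their incident vertices as polygon vertices and the polygons have intersection of zero area. -/
open MeasureTheory

/-- A set of points in the plane is in strictly convex position (forms the
vertex set of a strictly convex polygon) when no point lies in the convex hull
of the others. -/
def StrictConvexPosition (s : Set (EuclideanSpace ℝ (Fin 2))) : Prop :=
  ∀ x ∈ s, x ∉ convexHull ℝ (s \ {x})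

/-- In a strictly convex position set, no point lies in the segment between two
other points of the set. -/
lemma StrictConvexPosition.not_wbtw {s : Set (EuclideanSpace ℝ (Fin 2))}
    (hs : StrictConvexPosition s) {x y z : EuclideanSpace ℝ (Fin 2)}
    (hx : x ∈ s) (hy : y ∈ s) (hz : z ∈ s)
    (hxy : y ≠ x) (hyz : y ≠ z) : ¬ Wbtw ℝ x y z := by
  intro hw
  apply hs y hy
  have hseg : y ∈ segment ℝ x z := hw.mem_segment
  have : segment ℝ x z ⊆ convexHull ℝ (s \ {y}) := by
    rw [← convexHull_pair]
    exact convexHull_mono (by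
      rintro p (rfl | rfl)
      · exact ⟨hx, fun h => hxy (h.symm)⟩
      · exact ⟨hz, fun h => hyz (h.symm)⟩)
  exact this hseg

/-- A 3-adjacent cluster of 2 hyperedges has no convex polygon representation:
if two distinct hyperedges `e, f` of a hypergraph share at least three common
vertices, then there is no injective assignment of plane points to vertices
under which both hyperedges are drawn as strictly convex polygons (whose
vertices are exactly the points of their incident vertices) with intersection
of zero area. -/
theorem no_convex_rep_of_three_adjacent_cluster {V : Type*} [DecidableEq V]
    (E : Finset (Finset V)) (e f : Finset V)
    (he : e ∈ E) (hf : f ∈ E) (hef : e ≠ f)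
    (hshared : 3 ≤ (e ∩ f).card) :
    ¬ ∃ ρ : V → EuclideanSpace ℝ (Fin 2), Function.Injective ρ ∧
        StrictConvexPosition (ρ '' ↑e) ∧ StrictConvexPosition (ρ '' ↑f) ∧
        volume (convexHull ℝ (ρ '' ↑e) ∩ convexHull ℝ (ρ '' ↑f)) = 0 := by
  rintro ⟨ρ, hinj, hce, hcf, hvol⟩
  obtain ⟨a, b, c, ha, hb, hc, hab, hac, hbc⟩ := Finset.two_lt_card_iff.1 hshared
  rw [Finset.mem_inter] at ha hb hc
  set A := ρ a with hA
  set B := ρ b with hB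
  set C := ρ c with hC
  have hAB : A ≠ B := fun h => hab (hinj h)
  have hAC : A ≠ C := fun h => hac (hinj h)
  have hBC : B ≠ C := fun h => hbc (hinj h)
  have hAe : A ∈ ρ '' ↑e := ⟨a, by simpa using ha.1, rfl⟩
  have hBe : B ∈ ρ '' ↑e := ⟨b, by simpa using hb.1, rfl⟩
  have hCe : C ∈ ρ '' ↑e := ⟨c, by simpa using hc.1, rfl⟩
  have hAf : A ∈ ρ '' ↑f := ⟨a, by simpa using ha.2, rfl⟩
  have hBf : B ∈ ρ '' ↑f := ⟨b, by simpa using hb.2, rfl⟩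
  have hCf : C ∈ ρ '' ↑f := ⟨c, by simpa using hc.2, rfl⟩
  -- the three points are not collinear
  have hncol : ¬ Collinear ℝ ({A, B, C} : Set (EuclideanSpace ℝ (Fin 2))) := by
    intro hcol
    rcases hcol.wbtw_or_wbtw_or_wbtw with h | h | h
    · exact hce.not_wbtw hAe hBe hCe hAB.symm hBC h
    · exact hce.not_wbtw hBe hCe hAe hBC.symm hAC.symm h
    · exact hce.not_wbtw hCe hAe hBe hAC hAB h
  have hind : AffineIndependent ℝ ![A, B, C] :=
    affineIndependent_iff_not_collinear_set.2 hncol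
  -- the triangle spans the plane
  have hspan : affineSpan ℝ (Set.range ![A, B, C]) = ⊤ := by
    rw [hind.affineSpan_eq_top_iff_card_eq_finrank_add_one]
    simp
  have hrange : Set.range ![A, B, C] = ({A, B, C} : Set (EuclideanSpace ℝ (Fin 2))) := by
    simp only [Matrix.range_cons, Matrix.range_empty, Set.union_empty, Set.union_singleton]
    ext x; simp; tauto
  rw [hrange] at hspan
  -- so the triangle has nonempty interior, hence positive volume
  have hconv : Convex ℝ (convexHull ℝ ({A, B, C} : Set (EuclideanSpace ℝ (Fin 2)))) :=
    convex_convexHull ℝ _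
  have hint : (interior (convexHull ℝ ({A, B, C} : Set (EuclideanSpace ℝ (Fin 2))))).Nonempty := by
    rw [hconv.interior_nonempty_iff_affineSpan_eq_top]
    rwa [affineSpan_convexHull]
  have hpos : 0 < volume (convexHull ℝ ({A, B, C} : Set (EuclideanSpace ℝ (Fin 2)))) :=
    Measure.measure_pos_of_nonempty_interior _ hint
  -- but the triangle is inside both polygons
  have hsub : convexHull ℝ ({A, B, C} : Set (EuclideanSpace ℝ (Fin 2))) ⊆
      convexHull ℝ (ρ '' ↑e) ∩ convexHull ℝ (ρ '' ↑f) := by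
    apply Set.subset_inter
    · exact convexHull_mono (by rintro p (rfl | rfl | rfl) <;> assumption)
    · exact convexHull_mono (by rintro p (rfl | rfl | rfl) <;> assumption)
  have : volume ((convexHull ℝ) ({A, B, C} : Set (EuclideanSpace ℝ (Fin 2)))) ≤ volume ((convexHull ℝ) (ρ '' ↑e) ∩ (convexHull ℝ) (ρ '' ↑f)) := measure_mono hsub
  rw [hvol] at this
  exact absurd (le_antisymm this zero_le) hpos.ne'
end

section
/- If the interiors of two strictly convex polygons in the plane are disjoint and both polygons have two common vertices u and v, then, apart from u and v, the two polygons lie in opposite closed half-planes determined by the line through u and v. -/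
lemma aux_span_top (s : Finset (EuclideanSpace ℝ (Fin 2))) (hs3 : 3 ≤ s.card)
    (hs : StrictConvexPosition ↑s) :
    affineSpan ℝ (↑s : Set (EuclideanSpace ℝ (Fin 2))) = ⊤ := by
  by_contra h
  have hne : (↑s : Set (EuclideanSpace ℝ (Fin 2))).Nonempty := by
    obtain ⟨a, ha⟩ := Finset.card_pos.mp (lt_of_lt_of_le (by norm_num) hs3)
    exact ⟨a, ha⟩
  have hvs : vectorSpan ℝ (↑s : Set (EuclideanSpace ℝ (Fin 2))) ≠ ⊤ := fun hh =>
    h ((AffineSubspace.affineSpan_eq_top_iff_vectorSpan_eq_top_of_nonempty ℝ _ _ hne).mpr hh)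
  have hcol : Collinear ℝ (↑s : Set (EuclideanSpace ℝ (Fin 2))) := by
    rw [collinear_iff_finrank_le_one]
    have hlt : Module.finrank ℝ (vectorSpan ℝ (↑s : Set (EuclideanSpace ℝ (Fin 2))))
        < Module.finrank ℝ (EuclideanSpace ℝ (Fin 2)) :=
      Submodule.finrank_lt hvs
    simp [finrank_euclideanSpace_fin] at hlt
    omega
  obtain ⟨a, b, c, has, hbs, hcs, hab, hac, hbc⟩ :=
    (Finset.two_lt_card_iff (s := s)).mp (by omega)
  have hcol3 : Collinear ℝ ({a, b, c} : Set (EuclideanSpace ℝ (Fin 2))) :=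
    hcol.subset (by intro x hx; rcases hx with rfl|rfl|rfl <;> simpa)
  have key : ∀ x y z : EuclideanSpace ℝ (Fin 2), x ∈ s → y ∈ s → z ∈ s →
      x ≠ y → y ≠ z → Wbtw ℝ x y z → False := by
    intro x y z hx hy hz hxy hyz hw
    refine hs y hy ?_
    have hseg : segment ℝ x z ⊆ convexHull ℝ ((↑s : Set _) \ {y}) :=
      segment_subset_convexHull ⟨hx, hxy⟩ ⟨hz, hyz.symm⟩
    exact hseg hw.mem_segment
  rcases hcol3.wbtw_or_wbtw_or_wbtw with hw | hw | hw
  · exact key a b c has hbs hcs hab hbc hw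
  · exact key b c a hbs hcs has hbc (Ne.symm hac) hw
  · exact key c a b hcs has hbs (Ne.symm hac) hab hw


/-- A convex set with nonempty interior is contained in the closure of its interior. -/
lemma aux_subset_closure_interior {E : Type*} [NormedAddCommGroup E] [NormedSpace ℝ E]
    {S : Set E} (hS : Convex ℝ S) {x₀ : E} (hx₀ : x₀ ∈ interior S) :
    S ⊆ closure (interior S) := by
  intro y hy
  have h1 : openSegment ℝ x₀ y ⊆ interior S :=
    hS.openSegment_interior_self_subset_interior hx₀ hy
  have h2 : y ∈ closure (openSegment ℝ x₀ y) := by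
    rw [closure_openSegment]
    exact right_mem_segment ℝ x₀ y
  exact closure_mono h1 h2

/-- If the interiors of two strictly convex polygons in the plane (each with
at least three vertices) are disjoint and both polygons have two common
vertices `u` and `v`, then the two polygons lie in opposite closed half-planes
determined by the line through `u` and `v`: there is a nonzero linear
functional `φ` taking equal values at `u` and `v` (so its level line through
them is the line `uv`) with one polygon in `{φ ≤ φ u}` and the other in
`{φ u ≤ φ}`. -/
theorem opposite_halfplanes_of_disjoint_interiors
    (s t : Finset (EuclideanSpace ℝ (Fin 2)))
    (hs3 : 3 ≤ s.card) (ht3 : 3 ≤ t.card)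
    (hs : StrictConvexPosition ↑s) (ht : StrictConvexPosition ↑t)
    (u v : EuclideanSpace ℝ (Fin 2))
    (hus : u ∈ s) (hut : u ∈ t) (hvs : v ∈ s) (hvt : v ∈ t) (huv : u ≠ v)
    (hdisj :
      interior (convexHull ℝ (↑s : Set (EuclideanSpace ℝ (Fin 2)))) ∩
        interior (convexHull ℝ (↑t : Set (EuclideanSpace ℝ (Fin 2)))) = ∅) :
    ∃ φ : EuclideanSpace ℝ (Fin 2) →L[ℝ] ℝ, φ ≠ 0 ∧ φ u = φ v ∧
      (∀ x ∈ convexHull ℝ (↑s : Set (EuclideanSpace ℝ (Fin 2))), φ x ≤ φ u) ∧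
      (∀ y ∈ convexHull ℝ (↑t : Set (EuclideanSpace ℝ (Fin 2))), φ u ≤ φ y) := by
  set S := convexHull ℝ (↑s : Set (EuclideanSpace ℝ (Fin 2))) with hSdef
  set T := convexHull ℝ (↑t : Set (EuclideanSpace ℝ (Fin 2))) with hTdef
  have hSc : Convex ℝ S := convex_convexHull ℝ _
  have hTc : Convex ℝ T := convex_convexHull ℝ _
  have hSi : (interior S).Nonempty := by
    rw [hSc.interior_nonempty_iff_affineSpan_eq_top, affineSpan_convexHull]
    exact aux_span_top s hs3 hs
  have hTi : (interior T).Nonempty := by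
    rw [hTc.interior_nonempty_iff_affineSpan_eq_top, affineSpan_convexHull]
    exact aux_span_top t ht3 ht
  obtain ⟨x₀, hx₀⟩ := hSi
  obtain ⟨y₀, hy₀⟩ := hTi
  -- interior S is disjoint from T
  have hdisj' : Disjoint (interior S) T := by
    rw [Set.disjoint_iff_inter_eq_empty]
    have hTsub : T ⊆ closure (interior T) := aux_subset_closure_interior hTc hy₀
    have h1 : interior S ∩ closure (interior T) ⊆ closure (interior S ∩ interior T) :=
      isOpen_interior.inter_closure
    rw [hdisj, closure_empty] at h1
    exact Set.eq_empty_of_subset_empty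
      (fun z hz => h1 ⟨hz.1, hTsub hz.2⟩)
  obtain ⟨f, c, hfS, hfT⟩ :=
    geometric_hahn_banach_open hSc.interior isOpen_interior hTc hdisj'
  have hfS' : ∀ x ∈ S, f x ≤ c := by
    intro x hx
    have hcl : S ⊆ closure (interior S) := aux_subset_closure_interior hSc hx₀
    have : closure (interior S) ⊆ {z | f z ≤ c} := by
      apply closure_minimal
      · exact fun z hz => (hfS z hz).le
      · exact isClosed_le f.continuous continuous_const
    exact this (hcl hx)
  have huS : u ∈ S := subset_convexHull ℝ _ hus
  have hvS : v ∈ S := subset_convexHull ℝ _ hvs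
  have huT : u ∈ T := subset_convexHull ℝ _ hut
  have hvT : v ∈ T := subset_convexHull ℝ _ hvt
  have hfu : f u = c := le_antisymm (hfS' u huS) (hfT u huT)
  have hfv : f v = c := le_antisymm (hfS' v hvS) (hfT v hvT)
  refine ⟨f, ?_, by rw [hfu, hfv], fun x hx => by rw [hfu]; exact hfS' x hx,
    fun y hy => by rw [hfu]; exact hfT y hy⟩
  intro hf0
  have := hfS x₀ hx₀
  rw [hf0] at this
  have h2 := hfT u huT
  rw [hf0] at h2
  simp at this h2
  linarith
end

section
/- If three or more strictly convex polygons in the plane, each having at least three vertices, all contain a common point p as a vertex and pairwise have intersections of zero area, then the sum of the interior angles of the polygons at p is at most 2π. -/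
open MeasureTheory

section Aux

open Set

/-- The open sector of angle `θ` and radius `r` at the origin of `ℂ`,
starting at the positive real axis. -/
def mySector (θ r : ℝ) : Set ℂ :=
  {z | ‖z‖ < r ∧ Complex.arg z ∈ Set.Ioo 0 θ}

lemma measurableSet_mySector (θ r : ℝ) : MeasurableSet (mySector θ r) := by
  apply MeasurableSet.inter
  · exact measurableSet_lt continuous_norm.measurable measurable_const
  · exact Complex.measurable_arg measurableSet_Ioo

lemma mySector_subset_ball (θ r : ℝ) : mySector θ r ⊆ Metric.ball 0 r := by
  intro z hz
  simpa using hz.1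

lemma volume_mySector {θ r : ℝ} (hθ0 : 0 < θ) (hθπ : θ ≤ Real.pi) (hr : 0 ≤ r) :
    volume (mySector θ r) = ENNReal.ofReal (θ * r ^ 2 / 2) := by
  have hfin : volume (mySector θ r) ≠ ⊤ := by
    refine ne_top_of_le_ne_top ?_ (measure_mono (mySector_subset_ball θ r))
    rw [Complex.volume_ball]
    exact ENNReal.mul_ne_top (ENNReal.pow_ne_top ENNReal.ofReal_ne_top) ENNReal.coe_ne_top
  have hA : (Set.Ioo (0:ℝ) r ×ˢ Set.Ioo (0:ℝ) θ) ⊆ polarCoord.target := by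
    rintro ⟨x, y⟩ ⟨hx, hy⟩
    exact ⟨hx.1, ⟨lt_of_le_of_lt (by linarith [Real.pi_pos]) hy.1, lt_of_lt_of_le hy.2 hθπ⟩⟩
  have key : (∫ z : ℂ, (mySector θ r).indicator (1 : ℂ → ℝ) z)
      = ∫ q in Set.Ioo (0:ℝ) r ×ˢ Set.Ioo (0:ℝ) θ, q.1 := by
    rw [← Complex.integral_comp_polarCoord_symm]
    have hrwA : (∫ q in Set.Ioo (0:ℝ) r ×ˢ Set.Ioo (0:ℝ) θ, (q.1:ℝ))
        = ∫ q in polarCoord.target, (Set.Ioo (0:ℝ) r ×ˢ Set.Ioo (0:ℝ) θ).indicator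
            (fun q => q.1) q := by
      rw [setIntegral_indicator (measurableSet_Ioo.prod measurableSet_Ioo),
        Set.inter_eq_self_of_subset_right hA]
    rw [hrwA]
    apply setIntegral_congr_fun polarCoord.open_target.measurableSet
    intro q hq
    have hmem : Complex.polarCoord (Complex.polarCoord.symm q) = q :=
      Complex.polarCoord.right_inv hq
    rw [Complex.polarCoord_apply] at hmem
    have habs : ‖Complex.polarCoord.symm q‖ = q.1 := congrArg Prod.fst hmem
    have harg : Complex.arg (Complex.polarCoord.symm q) = q.2 := congrArg Prod.snd hmem
    by_cases h : q ∈ Set.Ioo (0:ℝ) r ×ˢ Set.Ioo (0:ℝ) θ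
    · have : Complex.polarCoord.symm q ∈ mySector θ r := by
        refine ⟨by rw [habs]; exact h.1.2, by rw [harg]; exact h.2⟩
      simp only [Set.indicator_of_mem h, Set.indicator_of_mem this, Pi.one_apply,
        smul_eq_mul, mul_one]
    · have : Complex.polarCoord.symm q ∉ mySector θ r := by
        intro hmem2
        apply h
        refine ⟨⟨hq.1, by rw [← habs]; exact hmem2.1⟩, by rw [← harg]; exact hmem2.2⟩
      simp only [Set.indicator_of_notMem h, Set.indicator_of_notMem this,
        smul_eq_mul, mul_zero]
  have h1 : (∫ z : ℂ, (mySector θ r).indicator (1 : ℂ → ℝ) z)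
      = (volume (mySector θ r)).toReal := by
    rw [integral_indicator_one (measurableSet_mySector θ r), measureReal_def]
  have h2 : (∫ q in Set.Ioo (0:ℝ) r ×ˢ Set.Ioo (0:ℝ) θ, (q.1 : ℝ)) = θ * r ^ 2 / 2 := by
    have : (∫ q in Set.Ioo (0:ℝ) r ×ˢ Set.Ioo (0:ℝ) θ, (q.1 : ℝ))
        = (∫ x in Set.Ioo (0:ℝ) r, x) * ∫ y in Set.Ioo (0:ℝ) θ, (1:ℝ) := by
      rw [Measure.volume_eq_prod, ← setIntegral_prod_mul (f := fun x : ℝ => x)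
        (g := fun _ : ℝ => (1:ℝ))]
      simp
    rw [this]
    have hx : (∫ x in Set.Ioo (0:ℝ) r, x) = r ^ 2 / 2 := by
      rw [← integral_Ioc_eq_integral_Ioo, ← intervalIntegral.integral_of_le hr,
        integral_id]
      ring
    have hy : (∫ y in Set.Ioo (0:ℝ) θ, (1:ℝ)) = θ := by
      simp [Real.volume_Ioo, ENNReal.toReal_ofReal hθ0.le, hθ0.le]
    rw [hx, hy]; ring
  rw [h1, h2] at key
  rw [← key, ENNReal.ofReal_toReal hfin]

lemma mySector_combo {ζ z : ℂ} (hζ : 0 < ζ.im) {r : ℝ}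
    (hz : z ∈ mySector (Complex.arg ζ) r) :
    ∃ c d : ℝ, 0 ≤ c ∧ 0 ≤ d ∧ c + d ≤ ‖z‖ * (1 + ‖ζ‖) / ζ.im ∧
      z = (c : ℂ) + (d : ℂ) * ζ := by
  obtain ⟨hzr, hα0, hαβ⟩ := hz
  set α := Complex.arg z with hα
  set β := Complex.arg ζ with hβ
  have hζ0 : ζ ≠ 0 := fun h => by simp [h] at hζ
  have hz0 : z ≠ 0 := by
    intro h
    rw [hα, h, Complex.arg_zero] at hα0
    exact lt_irrefl _ hα0
  have hβπ : β ≤ Real.pi := Complex.arg_le_pi ζ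
  have hαπ : α < Real.pi := lt_of_lt_of_le hαβ hβπ
  have habsz : 0 < ‖z‖ := norm_pos_iff.mpr hz0
  have habsζ : 0 < ‖ζ‖ := norm_pos_iff.mpr hζ0
  have hzre : z.re = ‖z‖ * Real.cos α := by
    rw [Complex.cos_arg hz0]; field_simp
  have hzim : z.im = ‖z‖ * Real.sin α := by
    rw [Complex.sin_arg]; field_simp
  have hζre : ζ.re = ‖ζ‖ * Real.cos β := by
    rw [Complex.cos_arg hζ0]; field_simp
  have hζim : ζ.im = ‖ζ‖ * Real.sin β := by
    rw [Complex.sin_arg]; field_simp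
  have hsinα : 0 ≤ Real.sin α := Real.sin_nonneg_of_nonneg_of_le_pi hα0.le hαπ.le
  have hsinβα : 0 ≤ Real.sin (β - α) :=
    Real.sin_nonneg_of_nonneg_of_le_pi (by linarith) (by linarith [Real.pi_pos, hα0])
  refine ⟨(z.re * ζ.im - z.im * ζ.re) / ζ.im, z.im / ζ.im, ?_, ?_, ?_, ?_⟩
  · apply div_nonneg _ hζ.le
    have : z.re * ζ.im - z.im * ζ.re = ‖z‖ * ‖ζ‖ * Real.sin (β - α) := by
      rw [hzre, hzim, hζre, hζim, Real.sin_sub]; ring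
    rw [this]; positivity
  · apply div_nonneg _ hζ.le
    rw [hzim]; positivity
  · have h1 : z.re * ζ.im - z.im * ζ.re ≤ ‖z‖ * ‖ζ‖ := by
      have : z.re * ζ.im - z.im * ζ.re = ‖z‖ * ‖ζ‖ * Real.sin (β - α) := by
        rw [hzre, hzim, hζre, hζim, Real.sin_sub]; ring
      rw [this]
      nlinarith [Real.sin_le_one (β - α), mul_pos habsz habsζ]
    have h2 : z.im ≤ ‖z‖ := le_trans (le_abs_self _) (Complex.abs_im_le_norm z)
    rw [← add_div, div_le_div_iff₀ hζ hζ]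
    nlinarith
  · apply Complex.ext
    · simp only [Complex.add_re, Complex.ofReal_re, Complex.mul_re, Complex.ofReal_im]
      field_simp
      ring
    · simp only [Complex.add_im, Complex.ofReal_im, Complex.mul_im, Complex.ofReal_re]
      field_simp
      ring

lemma angle_eq_arg_div {U V : ℂ} (hU : U ≠ 0) (hV : V ≠ 0) (h : 0 ≤ (V / U).im) :
    InnerProductGeometry.angle U V = Complex.arg (V / U) := by
  set ζ := V / U with hζdef
  have hζ0 : ζ ≠ 0 := div_ne_zero hV hU
  have hVζ : V = ζ * U := by rw [hζdef, div_mul_cancel₀ V hU]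
  have habsU : 0 < ‖U‖ := norm_pos_iff.mpr hU
  have habsζ : 0 < ‖ζ‖ := norm_pos_iff.mpr hζ0
  have hinner : (inner ℝ U V : ℝ) = ζ.re * Complex.normSq U := by
    rw [Complex.inner, hVζ]
    simp [Complex.mul_re, Complex.normSq_apply]
    ring
  rw [InnerProductGeometry.angle, hinner]
  have hnorm : ‖U‖ * ‖V‖ = ‖ζ‖ * (‖U‖) ^ 2 := by
    rw [hVζ, norm_mul]
    ring
  rw [hnorm]
  have hratio : ζ.re * Complex.normSq U / (‖ζ‖ * ‖U‖ ^ 2)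
      = Real.cos (Complex.arg ζ) := by
    rw [Complex.cos_arg hζ0, Complex.normSq_eq_norm_sq]
    field_simp
  rw [hratio, Real.arccos_cos (Complex.arg_nonneg_iff.2 h) (Complex.arg_le_pi ζ)]

/-- A convex combination of three points of a set lies in its convex hull. -/
lemma combo3_mem_convexHull {x y z : EuclideanSpace ℝ (Fin 2)}
    {t : Set (EuclideanSpace ℝ (Fin 2))}
    (hx : x ∈ t) (hy : y ∈ t) (hz : z ∈ t) {c1 c2 c3 : ℝ}
    (h1 : 0 ≤ c1) (h2 : 0 ≤ c2) (h3 : 0 ≤ c3) (hsum : c1 + c2 + c3 = 1) :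
    c1 • x + c2 • y + c3 • z ∈ convexHull ℝ t := by
  have := (convex_convexHull ℝ t).sum_mem (t := (Finset.univ : Finset (Fin 3)))
    (w := ![c1, c2, c3]) (z := ![x, y, z]) ?_ ?_ ?_
  · simpa [Fin.sum_univ_three] using this
  · intro i _; fin_cases i <;> simpa
  · simp [Fin.sum_univ_three, hsum]
  · intro i _
    fin_cases i <;> simp <;> exact subset_convexHull ℝ t ‹_›

/-- In a strictly convex position set, the two edge vectors at a vertex are
linearly independent. -/
lemma not_smul_edge {s : Finset (EuclideanSpace ℝ (Fin 2))}
    (hconv : StrictConvexPosition ↑s)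
    {p a b : EuclideanSpace ℝ (Fin 2)} (hp : p ∈ s) (ha : a ∈ s) (hb : b ∈ s)
    (hap : a ≠ p) (hbp : b ≠ p) (hab : a ≠ b) (t : ℝ)
    (h : b - p = t • (a - p)) : False := by
  have hb' : b = p + t • a - t • p := by
    have := h
    rw [smul_sub] at this
    have : b = p + (t • a - t • p) := by
      rw [← this]; abel
    rw [this]; abel
  rcases lt_trichotomy t 0 with ht | ht | ht
  · -- p is in the segment [a, b]
    have hmem : p ∈ convexHull ℝ ((↑s : Set _) \ {p}) := by
      have h1t : (1:ℝ) - t ≠ 0 := by linarith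
      have hseg : p ∈ segment ℝ a b := by
        refine ⟨-t / (1 - t), 1 / (1 - t), div_nonneg (by linarith) (by linarith),
          div_nonneg (by linarith) (by linarith), ?_, ?_⟩
        · field_simp
          ring
        · rw [hb']
          match_scalars <;> field_simp <;> ring
      refine segment_subset_convexHull ?_ ?_ hseg
      · exact ⟨ha, by simpa using hap⟩
      · exact ⟨hb, by simpa using hbp⟩
    exact hconv p hp hmem
  · -- t = 0 : b = p
    apply hbp
    rw [hb', ht]
    simp
  · rcases lt_trichotomy t 1 with ht1 | ht1 | ht1
    · -- b is in the segment [p, a]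
      have hmem : b ∈ convexHull ℝ ((↑s : Set _) \ {b}) := by
        have hseg : b ∈ segment ℝ p a := by
          refine ⟨1 - t, t, by linarith, ht.le, by ring, ?_⟩
          rw [hb']
          match_scalars <;> ring
        refine segment_subset_convexHull ?_ ?_ hseg
        · exact ⟨hp, by simpa using hbp.symm⟩
        · exact ⟨ha, by simpa using hab⟩
      exact hconv b hb hmem
    · -- t = 1 : a = b
      apply hab
      rw [hb', ht1]
      simp
    · -- a is in the segment [p, b]
      have ht0 : (0:ℝ) < t := ht
      have ht0' : t ≠ 0 := ne_of_gt ht0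
      have hmem : a ∈ convexHull ℝ ((↑s : Set _) \ {a}) := by
        have hseg : a ∈ segment ℝ p b := by
          refine ⟨1 - 1 / t, 1 / t, by
            have : 1 / t ≤ 1 := by
              rw [div_le_one ht0]; linarith
            linarith, by positivity, by ring, ?_⟩
          rw [hb']
          match_scalars <;> field_simp <;> ring
        refine segment_subset_convexHull ?_ ?_ hseg
        · exact ⟨hp, by simpa using hap.symm⟩
        · exact ⟨hb, by simpa using hab.symm⟩
      exact hconv a ha hmem
  
end Aux

/-- If `n ≥ 3` strictly convex polygons in the plane, each with at least three
vertices, all have a common point `p` as a vertex and pairwise have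
intersections of zero area, then the sum of their interior angles at `p` is at
most `2π`. The interior angle of the `i`-th polygon at `p` is the angle
`∠ (a i) p (b i)` where `a i, b i` are the two vertices adjacent to `p`,
characterized by the polygon lying in the cone at `p` spanned by the
directions `a i - p` and `b i - p`. -/
theorem sum_angles_at_common_vertex_le_two_pi
    (n : ℕ) (hn : 3 ≤ n)
    (s : Fin n → Finset (EuclideanSpace ℝ (Fin 2)))
    (p : EuclideanSpace ℝ (Fin 2))
    (a b : Fin n → EuclideanSpace ℝ (Fin 2))
    (hcard : ∀ i, 3 ≤ (s i).card)
    (hconv : ∀ i, StrictConvexPosition ↑(s i))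
    (hp : ∀ i, p ∈ s i)
    (ha : ∀ i, a i ∈ s i) (hb : ∀ i, b i ∈ s i)
    (hap : ∀ i, a i ≠ p) (hbp : ∀ i, b i ≠ p) (hab : ∀ i, a i ≠ b i)
    (hcone : ∀ i, ∀ x ∈ s i, ∃ c d : ℝ, 0 ≤ c ∧ 0 ≤ d ∧
      x - p = c • (a i - p) + d • (b i - p))
    (hzero : ∀ i j, i ≠ j →
      volume (convexHull ℝ (↑(s i) : Set (EuclideanSpace ℝ (Fin 2))) ∩
        convexHull ℝ (↑(s j) : Set (EuclideanSpace ℝ (Fin 2)))) = 0) :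
    ∑ i, EuclideanGeometry.angle (a i) p (b i) ≤ 2 * Real.pi := by
  classical
  have hπ := Real.pi_pos
  set Ψ : EuclideanSpace ℝ (Fin 2) ≃ₗᵢ[ℝ] ℂ := Complex.orthonormalBasisOneI.repr.symm with hΨ
  set U : Fin n → ℂ := fun i => Ψ (a i - p) with hUdef
  set V : Fin n → ℂ := fun i => Ψ (b i - p) with hVdef
  have hU0 : ∀ i, U i ≠ 0 := fun i h =>
    hap i (sub_eq_zero.1 (Ψ.map_eq_zero_iff.1 h))
  have hV0 : ∀ i, V i ≠ 0 := fun i h =>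
    hbp i (sub_eq_zero.1 (Ψ.map_eq_zero_iff.1 h))
  have him : ∀ i, (V i / U i).im ≠ 0 := by
    intro i h0
    have hζre : (V i / U i) = (((V i / U i).re : ℝ) : ℂ) := by
      apply Complex.ext
      · simp
      · simp [h0]
    have hVU : V i = (((V i / U i).re : ℝ) : ℂ) * U i := by
      rw [← hζre]
      exact (div_mul_cancel₀ (V i) (hU0 i)).symm
    have hsub : b i - p = (V i / U i).re • (a i - p) := by
      have h2 := congrArg Ψ.symm hVU
      rw [← Complex.real_smul, LinearIsometryEquiv.map_smul] at h2
      simpa [hUdef, hVdef] using h2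
    exact not_smul_edge (hconv i) (hp i) (ha i) (hb i) (hap i) (hbp i) (hab i) _ hsub
  -- choose a positively-oriented ordering of the two edge vectors
  have main : ∀ i, ∃ w1 w2 : ℂ, w1 ≠ 0 ∧ w2 ≠ 0 ∧ 0 < (w2 / w1).im ∧
      InnerProductGeometry.angle (U i) (V i) = Complex.arg (w2 / w1) ∧
      ((w1 = U i ∧ w2 = V i) ∨ (w1 = V i ∧ w2 = U i)) := by
    intro i
    by_cases h : 0 < (V i / U i).im
    · exact ⟨U i, V i, hU0 i, hV0 i, h, angle_eq_arg_div (hU0 i) (hV0 i) h.le,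
        Or.inl ⟨rfl, rfl⟩⟩
    · have hlt : (V i / U i).im < 0 := lt_of_le_of_ne (not_lt.1 h) (him i)
      have him2 : 0 < (U i / V i).im := by
        rw [← inv_div, Complex.inv_im]
        apply div_pos (by linarith)
        exact Complex.normSq_pos.2 (div_ne_zero (hV0 i) (hU0 i))
      exact ⟨V i, U i, hV0 i, hU0 i, him2,
        (InnerProductGeometry.angle_comm _ _).trans
          (angle_eq_arg_div (hV0 i) (hU0 i) him2.le), Or.inr ⟨rfl, rfl⟩⟩
  choose W1 W2 hW10 hW20 hξim hangleW hWor using main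
  set ξ : Fin n → ℂ := fun i => W2 i / W1 i with hξdef
  set θ : Fin n → ℝ := fun i => Complex.arg (ξ i) with hθdef
  have hξim' : ∀ i, 0 < (ξ i).im := hξim
  have hθpos : ∀ i, 0 < θ i := by
    intro i
    rcases (Complex.arg_nonneg_iff.2 (hξim' i).le).lt_or_eq with h | h
    · exact h
    · exact absurd (Complex.arg_eq_zero_iff.1 h.symm).2 (hξim' i).ne'
  have hθlt : ∀ i, θ i < Real.pi := fun i =>
    Complex.arg_lt_pi_iff.2 (Or.inr (hξim' i).ne')
  have hangle : ∀ i, EuclideanGeometry.angle (a i) p (b i) = θ i := by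
    intro i
    have h1 : EuclideanGeometry.angle (a i) p (b i)
        = InnerProductGeometry.angle (a i - p) (b i - p) := by
      rw [EuclideanGeometry.angle, vsub_eq_sub, vsub_eq_sub]
    have h2 : InnerProductGeometry.angle (a i - p) (b i - p)
        = InnerProductGeometry.angle (U i) (V i) := by
      rw [hUdef, hVdef]
      exact (Ψ.toLinearIsometry.angle_map _ _).symm
    rw [h1, h2, hangleW i, hθdef]
  -- radius small enough for every polygon
  have hne : (Finset.univ : Finset (Fin n)).Nonempty := ⟨⟨0, by omega⟩, Finset.mem_univ _⟩
  set R : Fin n → ℝ :=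
    fun i => ‖W1 i‖ * (ξ i).im / (1 + ‖ξ i‖) with hRdef
  have hRpos : ∀ i, 0 < R i := fun i => by
    have h1 : 0 < ‖W1 i‖ := norm_pos_iff.mpr (hW10 i)
    have h2 : 0 < (ξ i).im := hξim' i
    have h3 : 0 < 1 + ‖ξ i‖ := by positivity
    exact div_pos (mul_pos h1 h2) h3
  set r : ℝ := Finset.univ.inf' hne R with hrdef
  have hrpos : 0 < r := (Finset.lt_inf'_iff hne).2 fun i _ => hRpos i
  have hrR : ∀ i, r ≤ R i := fun i => Finset.inf'_le R (Finset.mem_univ i)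
  -- the unit rotations
  have hρmem : ∀ i, (W1 i / (‖W1 i‖ : ℝ) : ℂ) ∈ Metric.sphere (0:ℂ) 1 := by
    intro i
    rw [mem_sphere_zero_iff_norm, norm_div, Complex.norm_real, Real.norm_eq_abs, abs_of_pos (norm_pos_iff.mpr (hW10 i)), div_self
      (ne_of_gt (norm_pos_iff.mpr (hW10 i)))]
  set ρ : Fin n → Circle := fun i => ⟨_, hρmem i⟩ with hρdef
  have hρcoe : ∀ i, (ρ i : ℂ) = W1 i / (‖W1 i‖ : ℝ) := fun i => rfl
  set ψ : Fin n → (EuclideanSpace ℝ (Fin 2) → ℂ) :=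
    fun i x => (((ρ i)⁻¹ : Circle) : ℂ) * Ψ (x - p) with hψdef
  set X : Fin n → Set (EuclideanSpace ℝ (Fin 2)) :=
    fun i => ψ i ⁻¹' mySector (θ i) r with hXdef
  have hψabs : ∀ i x, ‖ψ i x‖ = ‖x - p‖ := by
    intro i x
    rw [hψdef]
    simp only [norm_mul]
    rw [Circle.norm_coe, one_mul, Ψ.norm_map]
  have hXball : ∀ i, X i ⊆ Metric.ball p r := by
    intro i x hx
    rw [mem_ball_iff_norm, ← hψabs i x]
    exact hx.1
  have hXhull : ∀ i, X i ⊆ convexHull ℝ (↑(s i) : Set (EuclideanSpace ℝ (Fin 2))) := by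
    intro i x hx
    have hz : ψ i x ∈ mySector (Complex.arg (ξ i)) r := hx
    obtain ⟨c, d, hc, hd, hcd, hzeq⟩ := mySector_combo (hξim' i) hz
    have habsW1 : 0 < ‖W1 i‖ := norm_pos_iff.mpr (hW10 i)
    -- recover Ψ (x - p)
    have hρinv : ((ρ i : ℂ)) * (((ρ i)⁻¹ : Circle) : ℂ) = 1 := by
      rw [← Circle.coe_mul, mul_inv_cancel, Circle.coe_one]
    have hrec : Ψ (x - p) = (ρ i : ℂ) * ψ i x := by
      rw [hψdef]
      dsimp only
      rw [← mul_assoc, hρinv, one_mul]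
    set c' : ℝ := c / ‖W1 i‖ with hc'def
    set d' : ℝ := d / ‖W1 i‖ with hd'def
    have hc' : 0 ≤ c' := div_nonneg hc habsW1.le
    have hd' : 0 ≤ d' := div_nonneg hd habsW1.le
    have hcd' : c' + d' ≤ 1 := by
      rw [hc'def, hd'def, ← add_div, div_le_one habsW1]
      have hK : (0:ℝ) < 1 + ‖ξ i‖ := by positivity
      have hm : 0 < (ξ i).im := hξim' i
      have e1 : ‖ψ i x‖ * (1 + ‖ξ i‖) / (ξ i).im
          ≤ r * (1 + ‖ξ i‖) / (ξ i).im := by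
        gcongr
        exact hz.1.le
      have e2 : r * (1 + ‖ξ i‖) / (ξ i).im
          ≤ (‖W1 i‖ * (ξ i).im / (1 + ‖ξ i‖))
            * (1 + ‖ξ i‖) / (ξ i).im := by
        gcongr
        exact hrR i
      have e3 : (‖W1 i‖ * (ξ i).im / (1 + ‖ξ i‖))
          * (1 + ‖ξ i‖) / (ξ i).im = ‖W1 i‖ := by
        field_simp
      linarith
    have hW1c : (‖W1 i‖ : ℂ) ≠ 0 := by
      exact_mod_cast ne_of_gt habsW1
    have hup : Ψ (x - p) = (c' : ℂ) * W1 i + (d' : ℂ) * W2 i := by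
      rw [hrec, hzeq, hρcoe i, hc'def, hd'def]
      have hξeq : ξ i = W2 i / W1 i := rfl
      rw [hξeq]
      push_cast
      field_simp [hW10 i]
    have hxp : x - p = c' • (Ψ.symm (W1 i)) + d' • (Ψ.symm (W2 i)) := by
      have h2 := congrArg Ψ.symm hup
      rw [Ψ.symm_apply_apply] at h2
      rw [h2, map_add, ← Complex.real_smul, ← Complex.real_smul,
        LinearIsometryEquiv.map_smul, LinearIsometryEquiv.map_smul]
    -- endpoints
    have hsymmU : Ψ.symm (U i) = a i - p := Ψ.symm_apply_apply _
    have hsymmV : Ψ.symm (V i) = b i - p := Ψ.symm_apply_apply _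
    have hAB1 : p + Ψ.symm (W1 i) ∈ (↑(s i) : Set (EuclideanSpace ℝ (Fin 2))) := by
      rcases hWor i with ⟨h1, _⟩ | ⟨h1, _⟩ <;> rw [h1]
      · rw [hsymmU]; simpa using ha i
      · rw [hsymmV]; simpa using hb i
    have hAB2 : p + Ψ.symm (W2 i) ∈ (↑(s i) : Set (EuclideanSpace ℝ (Fin 2))) := by
      rcases hWor i with ⟨_, h2⟩ | ⟨_, h2⟩ <;> rw [h2]
      · rw [hsymmV]; simpa using hb i
      · rw [hsymmU]; simpa using ha i
    have hxeq : x = (1 - c' - d') • p + c' • (p + Ψ.symm (W1 i))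
        + d' • (p + Ψ.symm (W2 i)) := by
      have h3 : x = p + (x - p) := by abel
      rw [h3, hxp]
      module
    rw [hxeq]
    exact combo3_mem_convexHull (Finset.mem_coe.2 (hp i)) hAB1 hAB2
      (by linarith) hc' hd' (by ring)
  -- measurability and volume of the sectors
  have hψcont : ∀ i, Continuous (ψ i) := by
    intro i
    rw [hψdef]
    exact continuous_const.mul (Ψ.continuous.comp (continuous_id.sub continuous_const))
  have hXmeas : ∀ i, MeasurableSet (X i) := fun i =>
    (hψcont i).measurable (measurableSet_mySector (θ i) r)
  have hψmp : ∀ i, MeasurePreserving (ψ i) volume volume := by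
    intro i
    have h1 : MeasurePreserving (fun x : EuclideanSpace ℝ (Fin 2) => x - p)
        volume volume := measurePreserving_sub_right volume p
    have h2 : MeasurePreserving (⇑Ψ) volume volume := Ψ.measurePreserving
    have h3 : MeasurePreserving (⇑(rotation (ρ i)⁻¹)) volume volume :=
      (rotation (ρ i)⁻¹).measurePreserving
    have heq : ψ i = ⇑(rotation (ρ i)⁻¹) ∘ (⇑Ψ ∘ (fun x => x - p)) := by
      funext x
      simp only [hψdef, Function.comp_apply, rotation_apply]
    rw [heq]
    exact h3.comp (h2.comp h1)
  have hXvol : ∀ i, volume (X i) = ENNReal.ofReal (θ i * r ^ 2 / 2) := by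
    intro i
    have h1 : volume (X i) = volume (mySector (θ i) r) :=
      (hψmp i).measure_preimage (measurableSet_mySector (θ i) r).nullMeasurableSet
    rw [h1, volume_mySector (hθpos i) (hθlt i).le hrpos.le]
  -- the sectors are pairwise a.e. disjoint
  have hAED : Pairwise (Function.onFun (MeasureTheory.AEDisjoint volume) X) := by
    intro i j hij
    exact measure_mono_null (Set.inter_subset_inter (hXhull i) (hXhull j)) (hzero i j hij)
  have hsum : ∑ i, volume (X i) ≤ volume (Metric.ball p r) := by
    rw [← tsum_fintype (L := SummationFilter.unconditional _), ← measure_iUnion₀ hAED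
      (fun i => (hXmeas i).nullMeasurableSet)]
    exact measure_mono (Set.iUnion_subset hXball)
  have hballvol : volume (Metric.ball p r) = ENNReal.ofReal (Real.pi * r ^ 2) := by
    have h2 : ((Fintype.card (Fin 2) : ℝ)) / 2 + 1 = 2 := by
      simp [Fintype.card_fin]; norm_num
    rw [EuclideanSpace.volume_ball, h2, Real.Gamma_two, div_one, Fintype.card_fin,
      Real.sq_sqrt Real.pi_pos.le, ← ENNReal.ofReal_pow hrpos.le,
      ← ENNReal.ofReal_mul (by positivity), mul_comm]
  have hreal : ∑ i, θ i * r ^ 2 / 2 ≤ Real.pi * r ^ 2 := by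
    have hEN : ENNReal.ofReal (∑ i, θ i * r ^ 2 / 2)
        ≤ ENNReal.ofReal (Real.pi * r ^ 2) := by
      rw [ENNReal.ofReal_sum_of_nonneg (fun i _ => by have := hθpos i; positivity)]
      calc ∑ i, ENNReal.ofReal (θ i * r ^ 2 / 2) = ∑ i, volume (X i) := by
            exact Finset.sum_congr rfl fun i _ => (hXvol i).symm
        _ ≤ volume (Metric.ball p r) := hsum
        _ = ENNReal.ofReal (Real.pi * r ^ 2) := hballvol
    exact (ENNReal.ofReal_le_ofReal_iff (by positivity)).1 hEN
  have hfinal : ∑ i, θ i ≤ 2 * Real.pi := by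
    have hr2 : (0:ℝ) < r ^ 2 := by positivity
    have hss : (∑ i, θ i) * (r ^ 2 / 2) ≤ Real.pi * r ^ 2 := by
      rw [Finset.sum_mul]
      calc ∑ i, θ i * (r ^ 2 / 2) = ∑ i, θ i * r ^ 2 / 2 := by
            exact Finset.sum_congr rfl fun i _ => by ring
        _ ≤ Real.pi * r ^ 2 := hreal
    nlinarith
  calc ∑ i, EuclideanGeometry.angle (a i) p (b i) = ∑ i, θ i :=
        Finset.sum_congr rfl fun i _ => hangle i
    _ ≤ 2 * Real.pi := hfinal
end
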